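/- There are exactly two partitions (as unordered set partitions) of the nine interior edges of K6 into three classes of pairwise noncrossing edges, namely {{13,14,46},{15,24,25},{26,35,36}} and {{13,36,46},{14,15,24},{25,26,35}}, where ab denotes the edge {a,b}. -/

import Mathlib

/-!
The three long edges `{j, j + 3}` pairwise cross, so each of the three sheets contains exactly
one of them. The short chord `{j, j + 2}` crosses the long edge through `j + 1`, so it lies in
the sheet of the long edge through `j` or in that through `j + 2`. Consecutive short chords cross
and the long edge through `j` also passes through `j + 3`; hence if `{j, j + 2}` lies in the
sheet of the long edge through `j`, then `{j + 1, j + 3}` lies in the sheet of the long edge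
through `j + 1`. Going around the hexagon, either every short chord lies in the sheet of the long
edge through its first endpoint or every one lies in that through its second endpoint: these are
the two partitions.
-/

/-- The cyclic length of the chord joining vertices `a` and `b` of `K₆`,
whose vertices are labeled by `ZMod 6` in cyclic order around a circle. -/
def cycLen (a b : ZMod 6) : ℕ := min (b - a).val (a - b).val

/-- An interior edge of `K₆`: a 2-element set of vertices at cyclic distance at least 2. -/
def InteriorEdge (e : Finset (ZMod 6)) : Prop :=
  e.card = 2 ∧ ∀ a ∈ e, ∀ b ∈ e, a ≠ b → 2 ≤ cycLen a b

/-- A short edge of `K₆`: a 2-element set of vertices at cyclic distance exactly 2. -/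
def ShortEdge (e : Finset (ZMod 6)) : Prop :=
  e.card = 2 ∧ ∀ a ∈ e, ∀ b ∈ e, a ≠ b → cycLen a b = 2

/-- A long edge of `K₆`: a 2-element set of vertices at cyclic distance exactly 3. -/
def LongEdge (e : Finset (ZMod 6)) : Prop :=
  e.card = 2 ∧ ∀ a ∈ e, ∀ b ∈ e, a ≠ b → cycLen a b = 3

/-- `x` lies in the open cyclic arc from `a` to `b` (in the cyclic order of labels). -/
def InArc (a b x : ZMod 6) : Prop := 0 < (x - a).val ∧ (x - a).val < (b - a).val

/-- Two chords `{a,b}` and `{c,d}` cross iff their endpoint sets are disjoint and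
exactly one of `c`, `d` lies in the open cyclic arc from `a` to `b`. -/
def Crosses (e f : Finset (ZMod 6)) : Prop :=
  Disjoint e f ∧ ∃ a b c d : ZMod 6, a ≠ b ∧ c ≠ d ∧ e = {a, b} ∧ f = {c, d} ∧
    Xor' (InArc a b c) (InArc a b d)

/-- A partition of the interior edges of `K₆` into (nonempty, pairwise disjoint) classes
of pairwise noncrossing edges. -/
def IsSheetPartition (P : Finset (Finset (Finset (ZMod 6)))) : Prop :=
  (∀ C ∈ P, C.Nonempty) ∧
  (∀ C ∈ P, ∀ D ∈ P, C ≠ D → Disjoint C D) ∧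
  (∀ e : Finset (ZMod 6), InteriorEdge e ↔ ∃ C ∈ P, e ∈ C) ∧
  (∀ C ∈ P, ∀ e ∈ C, ∀ f ∈ C, e ≠ f → ¬ Crosses e f)

/-- The partition `{{13,14,46},{15,24,25},{26,35,36}}`. -/
def partA : Finset (Finset (Finset (ZMod 6))) :=
  {{({1, 3} : Finset (ZMod 6)), {1, 4}, {4, 6}},
   {({1, 5} : Finset (ZMod 6)), {2, 4}, {2, 5}},
   {({2, 6} : Finset (ZMod 6)), {3, 5}, {3, 6}}}

/-- The partition `{{13,36,46},{14,15,24},{25,26,35}}`. -/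
def partB : Finset (Finset (Finset (ZMod 6))) :=
  {{({1, 3} : Finset (ZMod 6)), {3, 6}, {4, 6}},
   {({1, 4} : Finset (ZMod 6)), {1, 5}, {2, 4}},
   {({2, 5} : Finset (ZMod 6)), {2, 6}, {3, 5}}}

instance (a b x : ZMod 6) : Decidable (InArc a b x) := inferInstanceAs (Decidable (_ ∧ _))

instance (e f : Finset (ZMod 6)) : Decidable (Crosses e f) := by
  unfold Crosses Xor'; infer_instance

instance (e : Finset (ZMod 6)) : Decidable (InteriorEdge e) := inferInstanceAs (Decidable (_ ∧ _))

theorem ZMod.forall_or_forall_not_of_imp_add_one {n : ℕ} [NeZero n] {p : ZMod n → Prop}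
    (h : ∀ j, p j → p (j + 1)) : (∀ j, p j) ∨ ∀ j, ¬p j := by
  refine or_iff_not_imp_right.2 fun hp => ?_
  push Not at hp
  obtain ⟨a, ha⟩ := hp
  have hstep (k : ℕ) : p (a + k) := by
    induction k with
    | zero => simpa using ha
    | succ k ih => simpa [add_assoc] using h _ ih
  intro j
  simpa using hstep (j - a).val

theorem Finset.eq_of_subset_of_union_subset {α : Type*} [DecidableEq α]
    {A₀ A₁ A₂ K₀ K₁ K₂ : Finset α} (h₀ : A₀ ⊆ K₀) (h₁ : A₁ ⊆ K₁) (h₂ : A₂ ⊆ K₂)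
    (h₀₁ : Disjoint K₀ K₁) (h₀₂ : Disjoint K₀ K₂) (h₁₂ : Disjoint K₁ K₂)
    (hK : K₀ ∪ K₁ ∪ K₂ ⊆ A₀ ∪ A₁ ∪ A₂) : K₀ = A₀ ∧ K₁ = A₁ ∧ K₂ = A₂ := by
  simp only [Finset.subset_iff, Finset.disjoint_left, Finset.mem_union] at *
  refine ⟨?_, ?_, ?_⟩ <;> ext x <;> grind

def shortChord (j : ZMod 6) : Finset (ZMod 6) := {j, j + 2}

def longChord (j : ZMod 6) : Finset (ZMod 6) := {j, j + 3}

def interiorEdges : Finset (Finset (ZMod 6)) :=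
  {{1, 3}, {2, 4}, {3, 5}, {4, 6}, {1, 5}, {2, 6}, {1, 4}, {2, 5}, {3, 6}}

set_option maxRecDepth 10000 in
theorem interiorEdge_iff_mem_interiorEdges : ∀ e, InteriorEdge e ↔ e ∈ interiorEdges := by
  decide

theorem interiorEdge_shortChord : ∀ j, InteriorEdge (shortChord j) := by decide

theorem interiorEdge_longChord : ∀ j, InteriorEdge (longChord j) := by decide

theorem longChord_add_three : ∀ j, longChord (j + 3) = longChord j := by decide

theorem crosses_longChord_add_one : ∀ j, Crosses (longChord j) (longChord (j + 1)) := by decide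

theorem crosses_longChord_add_two : ∀ j, Crosses (longChord j) (longChord (j + 2)) := by decide

theorem crosses_shortChord_add_one : ∀ j, Crosses (shortChord j) (shortChord (j + 1)) := by
  decide

theorem crosses_shortChord_longChord_add_one :
    ∀ j, Crosses (shortChord j) (longChord (j + 1)) := by
  decide

theorem not_crosses_shortChord_add_three :
    ∀ j, ¬Crosses (shortChord j) (shortChord (j + 3)) := by
  decide

theorem Crosses.ne {e f : Finset (ZMod 6)} (h : Crosses e f) : e ≠ f := by
  rintro rfl
  obtain ⟨hee, a, b, -, -, -, -, rfl, -, -⟩ := h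
  simp at hee

def SameSheet {α : Type*} (P : Finset (Finset α)) (e f : α) : Prop :=
  ∃ C ∈ P, e ∈ C ∧ f ∈ C

theorem SameSheet.symm {α : Type*} {P : Finset (Finset α)} {e f : α} (h : SameSheet P e f) :
    SameSheet P f e :=
  let ⟨C, hC, he, hf⟩ := h; ⟨C, hC, hf, he⟩

/-- The sheet of the long edge through `k` when every short chord `{j, j + 2}` lies in the sheet
of the long edge through `j + d`. -/
def sheet (d k : ZMod 6) : Finset (Finset (ZMod 6)) :=
  {longChord k, shortChord (k - d), shortChord (k + 3 - d)}

theorem sheet_union : ∀ d, sheet d 0 ∪ sheet d 1 ∪ sheet d 2 = interiorEdges := by decide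

theorem partA_eq_sheets : partA = {sheet 0 0, sheet 0 1, sheet 0 2} := by decide

theorem partB_eq_sheets : partB = {sheet 2 0, sheet 2 1, sheet 2 2} := by decide

set_option maxRecDepth 10000 in
theorem not_disjoint_or_eq_shortChord_add_three {d : ZMod 6} (hd : d = 0 ∨ d = 2) :
    ∀ k, ∀ e ∈ sheet d k, ∀ f ∈ sheet d k,
      ¬Disjoint e f ∨ ∃ j, e = shortChord j ∧ f = shortChord (j + 3) := by
  rcases hd with rfl | rfl <;> decide

theorem not_crosses_of_mem_sheet {d k : ZMod 6} (hd : d = 0 ∨ d = 2) {e f : Finset (ZMod 6)}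
    (he : e ∈ sheet d k) (hf : f ∈ sheet d k) : ¬Crosses e f := by
  rcases not_disjoint_or_eq_shortChord_add_three hd k e he f hf with h | ⟨j, rfl, rfl⟩
  exacts [fun hc => h hc.1, not_crosses_shortChord_add_three j]

theorem disjoint_sheets {d : ZMod 6} (hd : d = 0 ∨ d = 2) :
    Disjoint (sheet d 0) (sheet d 1) ∧ Disjoint (sheet d 0) (sheet d 2) ∧
      Disjoint (sheet d 1) (sheet d 2) := by
  rcases hd with rfl | rfl <;> decide

theorem isSheetPartition_sheets {d : ZMod 6} (hd : d = 0 ∨ d = 2) :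
    IsSheetPartition {sheet d 0, sheet d 1, sheet d 2} := by
  obtain ⟨h₀₁, h₀₂, h₁₂⟩ := disjoint_sheets hd
  refine ⟨?_, ?_, fun e => ?_, ?_⟩ <;> simp only [Finset.mem_insert, Finset.mem_singleton]
  · rintro C (rfl | rfl | rfl) <;> exact ⟨_, Finset.mem_insert_self _ _⟩
  · rintro C (rfl | rfl | rfl) D (rfl | rfl | rfl) hCD <;>
      first | exact absurd rfl hCD | assumption | exact Disjoint.symm ‹_›
  · rw [interiorEdge_iff_mem_interiorEdges, ← sheet_union d]
    simp
  · rintro C (rfl | rfl | rfl) e he f hf - <;> exact not_crosses_of_mem_sheet hd he hf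

theorem card_sheets {d : ZMod 6} (hd : d = 0 ∨ d = 2) :
    ({sheet d 0, sheet d 1, sheet d 2} : Finset _).card = 3 := by
  rcases hd with rfl | rfl <;> decide

namespace IsSheetPartition

variable {P : Finset (Finset (Finset (ZMod 6)))} (hP : IsSheetPartition P)
include hP

theorem exists_mem {e : Finset (ZMod 6)} (he : InteriorEdge e) : ∃ C ∈ P, e ∈ C :=
  (hP.2.2.1 e).1 he

theorem not_sameSheet_of_crosses {e f : Finset (ZMod 6)} (h : Crosses e f) : ¬SameSheet P e f :=
  fun ⟨C, hC, he, hf⟩ => hP.2.2.2 C hC e he f hf h.ne h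

theorem mem_of_sameSheet {C : Finset (Finset (ZMod 6))} {e f : Finset (ZMod 6)} (hC : C ∈ P)
    (hf : f ∈ C) (h : SameSheet P e f) : e ∈ C := by
  obtain ⟨D, hD, he, hfD⟩ := h
  obtain rfl : D = C := by_contra fun hDC => Finset.disjoint_left.1 (hP.2.1 D hD C hC hDC) hfD hf
  exact he

theorem sameSheet_trans {e f g : Finset (ZMod 6)} (hef : SameSheet P e f)
    (hfg : SameSheet P f g) : SameSheet P e g :=
  let ⟨C, hC, he, hf⟩ := hef; ⟨C, hC, he, hP.mem_of_sameSheet hC hf hfg.symm⟩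

theorem sheet_subset {d k : ZMod 6} {K : Finset (Finset (ZMod 6))}
    (h : ∀ j, SameSheet P (shortChord j) (longChord (j + d))) (hK : K ∈ P)
    (hk : longChord k ∈ K) : sheet d k ⊆ K := by
  intro e he
  simp only [sheet, Finset.mem_insert, Finset.mem_singleton] at he
  rcases he with rfl | rfl | rfl
  · exact hk
  · exact hP.mem_of_sameSheet hK hk (by simpa using h (k - d))
  · exact hP.mem_of_sameSheet hK hk (by simpa [longChord_add_three] using h (k + 3 - d))

variable (hcard : P.card = 3)
include hcard

theorem exists_eq_of_longChord_mem (j : ZMod 6) :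
    ∃ K₀ K₁ K₂, K₀ ≠ K₁ ∧ K₀ ≠ K₂ ∧ K₁ ≠ K₂ ∧ P = {K₀, K₁, K₂} ∧
      longChord j ∈ K₀ ∧ longChord (j + 1) ∈ K₁ ∧ longChord (j + 2) ∈ K₂ := by
  obtain ⟨K₀, hK₀, h₀⟩ := hP.exists_mem (interiorEdge_longChord j)
  obtain ⟨K₁, hK₁, h₁⟩ := hP.exists_mem (interiorEdge_longChord (j + 1))
  obtain ⟨K₂, hK₂, h₂⟩ := hP.exists_mem (interiorEdge_longChord (j + 2))
  have hne {K L : Finset (Finset (ZMod 6))} {e f : Finset (ZMod 6)} (hK : K ∈ P) (he : e ∈ K)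
      (hf : f ∈ L) (hef : Crosses e f) : K ≠ L := by
    rintro rfl
    exact hP.not_sameSheet_of_crosses hef ⟨K, hK, he, hf⟩
  have h₀₁ := hne hK₀ h₀ h₁ (crosses_longChord_add_one j)
  have h₀₂ := hne hK₀ h₀ h₂ (crosses_longChord_add_two j)
  have h₁₂ := hne hK₁ h₁ h₂
    (by simpa [add_assoc, one_add_one_eq_two] using crosses_longChord_add_one (j + 1))
  refine ⟨K₀, K₁, K₂, h₀₁, h₀₂, h₁₂, (Finset.eq_of_subset_of_card_le ?_ ?_).symm, h₀, h₁, h₂⟩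
  · simp [Finset.insert_subset_iff, hK₀, hK₁, hK₂]
  · rw [hcard, Finset.card_insert_of_notMem (by simp [h₀₁, h₀₂]), Finset.card_pair h₁₂]

theorem sameSheet_longChord {e : Finset (ZMod 6)} (he : InteriorEdge e) (j : ZMod 6) :
    SameSheet P e (longChord j) ∨ SameSheet P e (longChord (j + 1)) ∨
      SameSheet P e (longChord (j + 2)) := by
  obtain ⟨K₀, K₁, K₂, -, -, -, rfl, h₀, h₁, h₂⟩ := hP.exists_eq_of_longChord_mem hcard j
  obtain ⟨C, hC, heC⟩ := hP.exists_mem he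
  simp only [Finset.mem_insert, Finset.mem_singleton] at hC
  rcases hC with rfl | rfl | rfl
  exacts [Or.inl ⟨_, by simp, heC, h₀⟩, Or.inr (Or.inl ⟨_, by simp, heC, h₁⟩),
    Or.inr (Or.inr ⟨_, by simp, heC, h₂⟩)]

theorem sameSheet_shortChord (j : ZMod 6) :
    SameSheet P (shortChord j) (longChord j) ∨
      SameSheet P (shortChord j) (longChord (j + 2)) :=
  (hP.sameSheet_longChord hcard (interiorEdge_shortChord j) j).imp_right
    (Or.resolve_left · (hP.not_sameSheet_of_crosses (crosses_shortChord_longChord_add_one j)))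

theorem sameSheet_shortChord_add_one {j : ZMod 6}
    (h : SameSheet P (shortChord j) (longChord j)) :
    SameSheet P (shortChord (j + 1)) (longChord (j + 1)) := by
  refine (hP.sameSheet_shortChord hcard (j + 1)).resolve_right fun h' => ?_
  rw [add_assoc, show (1 + 2 : ZMod 6) = 3 from rfl, longChord_add_three] at h'
  exact hP.not_sameSheet_of_crosses (crosses_shortChord_add_one j) (hP.sameSheet_trans h h'.symm)

theorem sameSheet_shortChord_dichotomy :
    (∀ j, SameSheet P (shortChord j) (longChord j)) ∨
      ∀ j, SameSheet P (shortChord j) (longChord (j + 2)) :=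
  (ZMod.forall_or_forall_not_of_imp_add_one fun _ =>
    hP.sameSheet_shortChord_add_one hcard).imp_right
      fun h j => (hP.sameSheet_shortChord hcard j).resolve_left (h j)

theorem eq_sheets {d : ZMod 6} (h : ∀ j, SameSheet P (shortChord j) (longChord (j + d))) :
    P = {sheet d 0, sheet d 1, sheet d 2} := by
  obtain ⟨K₀, K₁, K₂, h₀₁, h₀₂, h₁₂, rfl, h₀, h₁, h₂⟩ := hP.exists_eq_of_longChord_mem hcard 0
  have hK : K₀ ∪ K₁ ∪ K₂ ⊆ sheet d 0 ∪ sheet d 1 ∪ sheet d 2 := by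
    intro e he
    rw [sheet_union, ← interiorEdge_iff_mem_interiorEdges]
    simp only [Finset.mem_union] at he
    refine (hP.2.2.1 e).2 ?_
    rcases he with (he | he) | he <;> exact ⟨_, by simp, he⟩
  have hdisj {K L} (hK : K ∈ ({K₀, K₁, K₂} : Finset _)) (hL : L ∈ ({K₀, K₁, K₂} : Finset _))
      (hKL : K ≠ L) : Disjoint K L := hP.2.1 K hK L hL hKL
  obtain ⟨rfl, rfl, rfl⟩ := Finset.eq_of_subset_of_union_subset
    (hP.sheet_subset h (by simp) h₀) (hP.sheet_subset h (by simp) (by simpa using h₁))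
    (hP.sheet_subset h (by simp) (by simpa using h₂)) (hdisj (by simp) (by simp) h₀₁)
    (hdisj (by simp) (by simp) h₀₂) (hdisj (by simp) (by simp) h₁₂) hK
  rfl

end IsSheetPartition

/-- There are exactly two (unordered) partitions of the nine interior edges of `K₆` into
three classes of pairwise noncrossing edges, namely
`{{13,14,46},{15,24,25},{26,35,36}}` and `{{13,36,46},{14,15,24},{25,26,35}}`. -/
theorem stmt_10 :
    {P : Finset (Finset (Finset (ZMod 6))) | IsSheetPartition P ∧ P.card = 3} =
      {partA, partB} := by
  ext P
  rw [Set.mem_ofPred_eq, Set.mem_insert_iff, Set.mem_singleton_iff, partA_eq_sheets,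
    partB_eq_sheets]
  constructor
  · rintro ⟨hP, hcard⟩
    rcases hP.sameSheet_shortChord_dichotomy hcard with h | h
    · exact Or.inl (hP.eq_sheets hcard (d := 0) (by simpa using h))
    · exact Or.inr (hP.eq_sheets hcard h)
  · rintro (rfl | rfl)
    exacts [⟨isSheetPartition_sheets (.inl rfl), card_sheets (.inl rfl)⟩,
      ⟨isSheetPartition_sheets (.inr rfl), card_sheets (.inr rfl)⟩]
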